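/- Let F_WH(n) be the set of functions f : [0,1]^n → [0,1] in the free n-generated MV-algebra of McNaughton functions satisfying f(1,…,1) = 1, with pointwise operations. For f, g ∈ F_WH(n), g belongs to the congruence filter generated by f in F_WH(n) if and only if the one-set O_f = {x ∈ [0,1]^n : f(x) = 1} is contained in O_g. -/

import Mathlib

/-- MV-terms over n variables. -/
inductive MVT (n : ℕ) where
  | var : Fin n → MVT n
  | zero : MVT n
  | one : MVT n
  | mul : MVT n → MVT n → MVT n
  | imp : MVT n → MVT n → MVT n
  | inf : MVT n → MVT n → MVT n
  | sup : MVT n → MVT n → MVT n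

/-- Łukasiewicz product on [0,1]. -/
noncomputable def lmul (x y : ℝ) : ℝ := max 0 (x + y - 1)

/-- Łukasiewicz residuum on [0,1]. -/
noncomputable def limp (x y : ℝ) : ℝ := min 1 (1 - x + y)

/-- Evaluation of an MV-term in the standard MV-algebra on [0,1]. -/
noncomputable def evalM {n : ℕ} (v : Fin n → ℝ) : MVT n → ℝ
  | .var i => v i
  | .zero => 0
  | .one => 1
  | .mul a b => lmul (evalM v a) (evalM v b)
  | .imp a b => limp (evalM v a) (evalM v b)
  | .inf a b => min (evalM v a) (evalM v b)
  | .sup a b => max (evalM v a) (evalM v b)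

/-- The unit cube [0,1]^n. -/
def Cube (n : ℕ) : Set (Fin n → ℝ) := {x | ∀ i, x i ∈ Set.Icc (0:ℝ) 1}

/-- A McNaughton function, i.e. a member of the free n-generated MV-algebra realized
    as term functions on the cube (McNaughton's theorem). -/
def IsMcN (n : ℕ) (f : (Fin n → ℝ) → ℝ) : Prop :=
  ∃ t : MVT n, ∀ x ∈ Cube n, f x = evalM x t

/-- k-fold Łukasiewicz power, with empty product 1. -/
noncomputable def powL : ℕ → ℝ → ℝ
  | 0, _ => 1
  | k + 1, a => lmul a (powL k a)



open scoped Classical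

namespace MVAux

/-! ### fold helpers -/

theorem le_foldr_max {l : List ℝ} {a : ℝ} (h : a ∈ l) (b : ℝ) : a ≤ l.foldr max b := by
  induction l with
  | nil => cases h
  | cons c l ih =>
    rcases List.mem_cons.1 h with rfl | h
    · exact le_max_left _ _
    · exact le_trans (ih h) (le_max_right _ _)

theorem init_le_foldr_max (l : List ℝ) (b : ℝ) : b ≤ l.foldr max b := by
  induction l with
  | nil => simp
  | cons c l ih => exact le_trans ih (le_max_right _ _)

theorem foldr_max_le {l : List ℝ} {b m : ℝ} (h : ∀ a ∈ l, a ≤ m) (hb : b ≤ m) :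
    l.foldr max b ≤ m := by
  induction l with
  | nil => simpa
  | cons c l ih =>
    exact max_le (h c (List.mem_cons_self)) (ih fun a ha => h a (List.mem_cons_of_mem _ ha))

theorem foldr_max_mem (l : List ℝ) (b : ℝ) : l.foldr max b = b ∨ l.foldr max b ∈ l := by
  induction l with
  | nil => simp
  | cons c l ih =>
    rcases le_total c (l.foldr max b) with h | h
    · rw [List.foldr_cons, max_eq_right h]
      rcases ih with h' | h'
      · exact Or.inl h'
      · exact Or.inr (List.mem_cons_of_mem _ h')
    · rw [List.foldr_cons, max_eq_left h]
      exact Or.inr (List.mem_cons_self)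

theorem foldr_min_le {l : List ℝ} {a : ℝ} (h : a ∈ l) (b : ℝ) : l.foldr min b ≤ a := by
  induction l with
  | nil => cases h
  | cons c l ih =>
    rcases List.mem_cons.1 h with rfl | h
    · exact min_le_left _ _
    · exact le_trans (min_le_right _ _) (ih h)

theorem foldr_min_le_init (l : List ℝ) (b : ℝ) : l.foldr min b ≤ b := by
  induction l with
  | nil => simp
  | cons c l ih => exact le_trans (min_le_right _ _) ih

theorem le_foldr_min {l : List ℝ} {b m : ℝ} (h : ∀ a ∈ l, m ≤ a) (hb : m ≤ b) :
    m ≤ l.foldr min b := by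
  induction l with
  | nil => simpa
  | cons c l ih =>
    exact le_min (h c (List.mem_cons_self)) (ih fun a ha => h a (List.mem_cons_of_mem _ ha))

theorem foldr_min_mem (l : List ℝ) (b : ℝ) : l.foldr min b = b ∨ l.foldr min b ∈ l := by
  induction l with
  | nil => simp
  | cons c l ih =>
    rcases le_total c (l.foldr min b) with h | h
    · rw [List.foldr_cons, min_eq_left h]
      exact Or.inr (List.mem_cons_self)
    · rw [List.foldr_cons, min_eq_right h]
      rcases ih with h' | h'
      · exact Or.inl h'
      · exact Or.inr (List.mem_cons_of_mem _ h')

/-- Clamp lemma: given upper bounds `A` and lower bounds `B` that are compatible,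
any `t` can be moved into the feasible interval, moving by at most the violation. -/
theorem clamp (A B : List ℝ) (hab : ∀ a ∈ A, ∀ b ∈ B, b ≤ a) (t : ℝ) :
    ∃ t' : ℝ, (∀ a ∈ A, t' ≤ a) ∧ (∀ b ∈ B, b ≤ t') ∧
      |t - t'| ≤ max ((A.map (fun a => t - a)).foldr max 0) ((B.map (fun b => b - t)).foldr max 0) := by
  refine ⟨B.foldr max (A.foldr min t), ?_, ?_, ?_⟩
  · intro a ha
    apply foldr_max_le
    · intro b hb; exact hab a ha b hb
    · exact le_trans (foldr_min_le ha t) le_rfl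
  · intro b hb; exact le_foldr_max hb _
  · rcases abs_cases (t - B.foldr max (A.foldr min t)) with ⟨he, _⟩ | ⟨he, _⟩
    · rw [he]
      refine le_trans ?_ (le_max_left _ _)
      have h1 : t - B.foldr max (A.foldr min t) ≤ t - A.foldr min t :=
        sub_le_sub_left (init_le_foldr_max _ _) t
      rcases foldr_min_mem A t with h2 | h2
      · rw [h2]
        exact le_trans (by linarith [init_le_foldr_max B t]) (init_le_foldr_max _ _)
      · refine le_trans h1 (le_foldr_max ?_ 0)
        exact List.mem_map.2 ⟨_, h2, rfl⟩
    · rw [he]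
      refine le_trans ?_ (le_max_right _ _)
      rcases foldr_max_mem B (A.foldr min t) with h2 | h2
      · rw [h2]
        have := foldr_min_le_init A t
        exact le_trans (by linarith) (init_le_foldr_max _ _)
      · refine le_trans ?_ (le_foldr_max (List.mem_map.2 ⟨_, h2, rfl⟩) 0)
        linarith

/-! ### Constraints and the Hoffman-type error bound via Fourier–Motzkin -/

abbrev Cst (n : ℕ) := (Fin n → ℝ) × ℝ

noncomputable def cval {n : ℕ} (c : Cst n) (x : Fin n → ℝ) : ℝ := (∑ i, c.1 i * x i) + c.2

def Sat {n : ℕ} (L : List (Cst n)) (x : Fin n → ℝ) : Prop := ∀ c ∈ L, cval c x ≤ 0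

noncomputable def Viol {n : ℕ} (L : List (Cst n)) (x : Fin n → ℝ) : ℝ :=
  (L.map (fun c => max (cval c x) 0)).foldr max 0

theorem viol_nonneg {n : ℕ} (L : List (Cst n)) (x : Fin n → ℝ) : 0 ≤ Viol L x :=
  init_le_foldr_max _ _

theorem cval_le_viol {n : ℕ} {L : List (Cst n)} {c : Cst n} (h : c ∈ L) (x : Fin n → ℝ) :
    cval c x ≤ Viol L x := by
  have h1 : max (cval c x) 0 ∈ L.map (fun c => max (cval c x) 0) := List.mem_map.2 ⟨c, h, rfl⟩
  exact le_trans (le_max_left _ _) (le_foldr_max h1 0)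

theorem viol_le {n : ℕ} {L : List (Cst n)} {x : Fin n → ℝ} {m : ℝ}
    (h : ∀ c ∈ L, cval c x ≤ m) (hm : 0 ≤ m) : Viol L x ≤ m := by
  apply foldr_max_le _ hm
  intro a ha
  rcases List.mem_map.1 ha with ⟨c, hc, rfl⟩
  exact max_le (h c hc) hm

/-- coefficient of the last variable -/
noncomputable def sc {n : ℕ} (c : Cst (n + 1)) : ℝ := c.1 (Fin.last n)

/-- the part of the constraint on the first `n` variables -/
noncomputable def ic {n : ℕ} (c : Cst (n + 1)) : Cst n := (fun i => c.1 i.castSucc, c.2)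

theorem cval_snoc {n : ℕ} (c : Cst (n + 1)) (x : Fin n → ℝ) (t : ℝ) :
    cval c (Fin.snoc x t) = cval (ic c) x + sc c * t := by
  simp only [cval, ic, sc, Fin.sum_univ_castSucc, Fin.snoc_castSucc, Fin.snoc_last]
  ring

/-- normalized combination of an upper-bound and a lower-bound constraint -/
noncomputable def comb {n : ℕ} (c d : Cst (n + 1)) : Cst n :=
  (fun i => c.1 i.castSucc / sc c + d.1 i.castSucc / (-sc d), c.2 / sc c + d.2 / (-sc d))

theorem cval_comb {n : ℕ} (c d : Cst (n + 1)) (x : Fin n → ℝ) :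
    cval (comb c d) x = cval (ic c) x / sc c + cval (ic d) x / (-sc d) := by
  simp only [cval, comb, ic, div_eq_mul_inv, add_mul, Finset.sum_add_distrib, Finset.sum_mul]
  rw [Finset.sum_congr rfl fun i _ => mul_right_comm (c.1 i.castSucc) (sc c)⁻¹ (x i),
    Finset.sum_congr rfl fun i _ => mul_right_comm (d.1 i.castSucc) (-sc d)⁻¹ (x i)]
  ring

/-- Fourier–Motzkin elimination of the last variable -/
noncomputable def elim {n : ℕ} (L : List (Cst (n + 1))) : List (Cst n) :=
  (L.filterMap fun c => if sc c = 0 then some (ic c) else none) ++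
  (L.flatMap fun c => L.filterMap fun d => if 0 < sc c ∧ sc d < 0 then some (comb c d) else none)

theorem mem_elim_zero {n : ℕ} {L : List (Cst (n + 1))} {c : Cst (n + 1)}
    (hc : c ∈ L) (hs : sc c = 0) : ic c ∈ elim L := by
  apply List.mem_append_left
  exact List.mem_filterMap.2 ⟨c, hc, by rw [if_pos hs]⟩

theorem mem_elim_comb {n : ℕ} {L : List (Cst (n + 1))} {c d : Cst (n + 1)}
    (hc : c ∈ L) (hd : d ∈ L) (hsc : 0 < sc c) (hsd : sc d < 0) : comb c d ∈ elim L := by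
  apply List.mem_append_right
  exact List.mem_flatMap.2 ⟨c, hc, List.mem_filterMap.2 ⟨d, hd, by rw [if_pos ⟨hsc, hsd⟩]⟩⟩

theorem mem_elim_cases {n : ℕ} {L : List (Cst (n + 1))} {e : Cst n} (he : e ∈ elim L) :
    (∃ c ∈ L, sc c = 0 ∧ e = ic c) ∨
    (∃ c ∈ L, ∃ d ∈ L, 0 < sc c ∧ sc d < 0 ∧ e = comb c d) := by
  rcases List.mem_append.1 he with h | h
  · rcases List.mem_filterMap.1 h with ⟨c, hc, hce⟩
    by_cases hs : sc c = 0
    · rw [if_pos hs] at hce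
      exact Or.inl ⟨c, hc, hs, (Option.some_injective _ hce).symm⟩
    · rw [if_neg hs] at hce; cases hce
  · rcases List.mem_flatMap.1 h with ⟨c, hc, h2⟩
    rcases List.mem_filterMap.1 h2 with ⟨d, hd, hde⟩
    by_cases hs : 0 < sc c ∧ sc d < 0
    · rw [if_pos hs] at hde
      exact Or.inr ⟨c, hc, d, hd, hs.1, hs.2, (Option.some_injective _ hde).symm⟩
    · rw [if_neg hs] at hde; cases hde

/-- the scale factor for the elimination step -/
noncomputable def kap {n : ℕ} (L : List (Cst (n + 1))) : ℝ :=
  1 + 2 * (L.map fun c => if sc c = 0 then 0 else 1 / |sc c|).foldr max 0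

theorem one_le_kap {n : ℕ} (L : List (Cst (n + 1))) : 1 ≤ kap L := by
  have h := init_le_foldr_max (L.map fun c => if sc c = 0 then 0 else 1 / |sc c|) 0
  unfold kap; linarith

theorem inv_le_kap {n : ℕ} {L : List (Cst (n + 1))} {c : Cst (n + 1)} (hc : c ∈ L)
    (hs : sc c ≠ 0) : 1 / |sc c| ≤ (kap L - 1) / 2 := by
  have h : (1 : ℝ) / |sc c| ≤ (L.map fun c => if sc c = 0 then 0 else 1 / |sc c|).foldr max 0 := by
    refine le_foldr_max (List.mem_map.2 ⟨c, hc, ?_⟩) 0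
    rw [if_neg hs]
  unfold kap; linarith

theorem viol_elim {n : ℕ} (L : List (Cst (n + 1))) (x : Fin n → ℝ) (t : ℝ) :
    Viol (elim L) x ≤ kap L * Viol L (Fin.snoc x t) := by
  set V := Viol L (Fin.snoc x t) with hV
  have hV0 : 0 ≤ V := viol_nonneg _ _
  have hk1 : 1 ≤ kap L := one_le_kap L
  have hkV : 0 ≤ kap L * V := mul_nonneg (by linarith) hV0
  apply viol_le _ hkV
  intro e he
  rcases mem_elim_cases he with ⟨c, hc, hs, rfl⟩ | ⟨c, hc, d, hd, hsc, hsd, rfl⟩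
  · have h1 : cval c (Fin.snoc x t) ≤ V := cval_le_viol hc _
    rw [cval_snoc, hs] at h1
    calc cval (ic c) x ≤ V := by linarith
    _ ≤ kap L * V := le_mul_of_one_le_left hV0 hk1
  · rw [cval_comb]
    have h1 : cval c (Fin.snoc x t) ≤ V := cval_le_viol hc _
    have h2 : cval d (Fin.snoc x t) ≤ V := cval_le_viol hd _
    rw [cval_snoc] at h1 h2
    have hsd' : (0:ℝ) < -sc d := by linarith
    have hscne : sc c ≠ 0 := ne_of_gt hsc
    have hsdne : sc d ≠ 0 := ne_of_lt hsd
    have b1 : 1 / sc c ≤ (kap L - 1) / 2 := by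
      have := inv_le_kap hc hscne; rwa [abs_of_pos hsc] at this
    have b2 : 1 / (-sc d) ≤ (kap L - 1) / 2 := by
      have := inv_le_kap hd hsdne; rwa [abs_of_neg hsd] at this
    have u1 : cval (ic c) x / sc c ≤ V / sc c - t := by
      have h := div_le_div_of_nonneg_right (c := sc c) (by linarith : cval (ic c) x ≤ V - sc c * t) hsc.le
      rwa [sub_div, mul_div_cancel_left₀ _ hscne] at h
    have u2 : cval (ic d) x / (-sc d) ≤ V / (-sc d) + t := by
      have h := div_le_div_of_nonneg_right (c := -sc d) (by linarith : cval (ic d) x ≤ V - sc d * t) hsd'.le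
      have h2 : (sc d * t) / (-sc d) = -t := by rw [div_neg, mul_div_cancel_left₀ _ hsdne]
      rw [sub_div, h2] at h
      linarith
    have s1 : V / sc c ≤ V * ((kap L - 1) / 2) := by
      rw [div_eq_mul_one_div]; exact mul_le_mul_of_nonneg_left b1 hV0
    have s2 : V / (-sc d) ≤ V * ((kap L - 1) / 2) := by
      rw [div_eq_mul_one_div]; exact mul_le_mul_of_nonneg_left b2 hV0
    nlinarith [hV0]
theorem cval_diff_le {n : ℕ} (c : Cst n) {x y : Fin n → ℝ} {M : ℝ}
    (h : ∀ i, |x i - y i| ≤ M) : |cval c x - cval c y| ≤ (∑ i, |c.1 i|) * M := by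
  have e : cval c x - cval c y = ∑ i, c.1 i * (x i - y i) := by
    simp only [cval, mul_sub, Finset.sum_sub_distrib]
    ring
  rw [e, Finset.sum_mul]
  refine le_trans (Finset.abs_sum_le_sum_abs _ _) (Finset.sum_le_sum fun i _ => ?_)
  rw [abs_mul]
  exact mul_le_mul_of_nonneg_left (h i) (abs_nonneg _)

theorem hoffman : ∀ (n : ℕ) (L : List (Cst n)),
    (∃ C : ℝ, 0 ≤ C ∧ ∀ x : Fin n → ℝ, ∃ y, Sat L y ∧ ∀ i, |x i - y i| ≤ C * Viol L x) ∨
    (∃ δ : ℝ, 0 < δ ∧ ∀ x : Fin n → ℝ, δ ≤ Viol L x) := by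
  intro n
  induction n with
  | zero =>
    intro L
    by_cases h : ∀ c ∈ L, c.2 ≤ 0
    · left
      refine ⟨0, le_rfl, fun x => ⟨x, fun c hc => ?_, fun i => i.elim0⟩⟩
      have e : cval c x = c.2 := by simp [cval]
      rw [e]; exact h c hc
    · right
      push_neg at h
      obtain ⟨c, hc, hc2⟩ := h
      refine ⟨c.2, hc2, fun x => ?_⟩
      have e : cval c x = c.2 := by simp [cval]
      calc c.2 = cval c x := e.symm
      _ ≤ Viol L x := cval_le_viol hc x
  | succ n IH =>
    intro L
    have hk1 : 1 ≤ kap L := one_le_kap L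
    have hk0 : (0:ℝ) < kap L := by linarith
    rcases IH (elim L) with ⟨C', hC'0, hC'⟩ | ⟨δ', hδ'0, hδ'⟩
    · left
      set S : ℝ := (L.map fun c => if sc c = 0 then 0 else 1 / |sc c|).foldr max 0 with hSdef
      have hS0 : 0 ≤ S := init_le_foldr_max _ _
      have hkS : kap L = 1 + 2 * S := rfl
      set W : ℝ := (L.map fun c => ∑ i, |(ic c).1 i|).foldr max 0 with hWdef
      have hW0 : 0 ≤ W := init_le_foldr_max _ _
      have hWc : ∀ c ∈ L, (∑ i, |(ic c).1 i|) ≤ W := by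
        intro c hc
        rw [hWdef]
        exact le_foldr_max (l := L.map fun c => ∑ i, |(ic c).1 i|)
          (List.mem_map.2 ⟨c, hc, rfl⟩) 0
      set γ : ℝ := S * (1 + W * (C' * kap L)) with hγdef
      have hγ0 : 0 ≤ γ := mul_nonneg hS0
        (by nlinarith [mul_nonneg hW0 (mul_nonneg hC'0 hk0.le)])
      refine ⟨max (C' * kap L) γ, le_trans hγ0 (le_max_right _ _), fun x => ?_⟩
      set x' : Fin n → ℝ := Fin.init x with hx'def
      set t : ℝ := x (Fin.last n) with htdef
      have hx : Fin.snoc x' t = x := Fin.snoc_init_self x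
      set V : ℝ := Viol L x with hVdef
      have hV0 : 0 ≤ V := viol_nonneg _ _
      have hγV0 : 0 ≤ γ * V := mul_nonneg hγ0 hV0
      have hviol : Viol (elim L) x' ≤ kap L * V := by
        have h := viol_elim L x' t
        rwa [hx] at h
      obtain ⟨y', hy'sat, hy'dist⟩ := hC' x'
      have hy'd : ∀ i, |x' i - y' i| ≤ C' * (kap L * V) := fun i =>
        le_trans (hy'dist i) (mul_le_mul_of_nonneg_left hviol hC'0)
      -- upper and lower bound lists for the last variable
      set A : List ℝ := L.filterMap fun c =>
        if 0 < sc c then some (-(cval (ic c) y') / sc c) else none with hAdef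
      set B : List ℝ := L.filterMap fun d =>
        if sc d < 0 then some (cval (ic d) y' / (-sc d)) else none with hBdef
      have memA : ∀ a ∈ A, ∃ c ∈ L, 0 < sc c ∧ a = -(cval (ic c) y') / sc c := by
        intro a ha
        rcases List.mem_filterMap.1 ha with ⟨c, hc, hce⟩
        by_cases hp : 0 < sc c
        · rw [if_pos hp] at hce
          exact ⟨c, hc, hp, (Option.some_injective _ hce).symm⟩
        · rw [if_neg hp] at hce; cases hce
      have memB : ∀ b ∈ B, ∃ d ∈ L, sc d < 0 ∧ b = cval (ic d) y' / (-sc d) := by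
        intro b hb
        rcases List.mem_filterMap.1 hb with ⟨d, hd, hde⟩
        by_cases hp : sc d < 0
        · rw [if_pos hp] at hde
          exact ⟨d, hd, hp, (Option.some_injective _ hde).symm⟩
        · rw [if_neg hp] at hde; cases hde
      have hab : ∀ a ∈ A, ∀ b ∈ B, b ≤ a := by
        intro a ha b hb
        obtain ⟨c, hc, hpc, rfl⟩ := memA a ha
        obtain ⟨d, hd, hpd, rfl⟩ := memB b hb
        have h1 : cval (comb c d) y' ≤ 0 := hy'sat _ (mem_elim_comb hc hd hpc hpd)
        rw [cval_comb] at h1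
        rw [neg_div]
        linarith
      obtain ⟨t', ht'A, ht'B, ht'd⟩ := clamp A B hab t
      -- the extended point satisfies L
      have hsat : Sat L (Fin.snoc y' t') := by
        intro c hc
        rw [cval_snoc]
        rcases lt_trichotomy (sc c) 0 with h | h | h
        · have hb : cval (ic c) y' / (-sc c) ∈ B :=
            List.mem_filterMap.2 ⟨c, hc, by rw [if_pos h]⟩
          have h1 := ht'B _ hb
          rw [div_le_iff₀ (neg_pos.2 h)] at h1
          linarith
        · have h1 := hy'sat _ (mem_elim_zero hc h)
          rw [h, zero_mul, add_zero]
          exact h1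
        · have ha : -(cval (ic c) y') / sc c ∈ A :=
            List.mem_filterMap.2 ⟨c, hc, by rw [if_pos h]⟩
          have h1 := ht'A _ ha
          rw [le_div_iff₀ h] at h1
          linarith
      -- the key quantitative bounds on the clamping
      have keyA : ∀ a ∈ A, t - a ≤ γ * V := by
        intro a ha
        obtain ⟨c, hc, hpc, rfl⟩ := memA a ha
        have hs : 1 / sc c ≤ S := by
          have h := le_foldr_max (l := L.map fun c => if sc c = 0 then 0 else 1 / |sc c|)
            (List.mem_map.2 ⟨c, hc, by rw [if_neg (ne_of_gt hpc)]⟩) 0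
          rwa [abs_of_pos hpc] at h
        have h1s : 1 ≤ S * sc c := by
          rw [div_le_iff₀ hpc] at hs; linarith
        have hdiff : |cval (ic c) y' - cval (ic c) x'| ≤ W * (C' * (kap L * V)) := by
          refine le_trans (cval_diff_le (ic c) (M := C' * (kap L * V)) fun i => ?_) ?_
          · rw [abs_sub_comm]; exact hy'd i
          · exact mul_le_mul_of_nonneg_right (hWc c hc)
              (mul_nonneg hC'0 (mul_nonneg hk0.le hV0))
        have hcx : cval (ic c) x' + sc c * t ≤ V := by
          have h1 : cval c x ≤ V := cval_le_viol hc x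
          rw [← hx, cval_snoc] at h1
          exact h1
        have hP : 0 ≤ (1 + W * (C' * kap L)) * V :=
          mul_nonneg (by nlinarith [mul_nonneg hW0 (mul_nonneg hC'0 hk0.le)]) hV0
        have hmain : (1 + W * (C' * kap L)) * V ≤ sc c * (γ * V) := by
          have e : sc c * (γ * V) = (S * sc c) * ((1 + W * (C' * kap L)) * V) := by
            rw [hγdef]; ring
          rw [e]
          exact le_mul_of_one_le_left hP h1s
        rw [neg_div, sub_neg_eq_add]
        have h2 : cval (ic c) y' ≤ (1 + W * (C' * kap L)) * V - sc c * t := by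
          have h3 := (abs_le.1 hdiff).2
          linarith
        have hd2 : cval (ic c) y' ≤ (γ * V - t) * sc c := by linarith
        have hd3 := (div_le_iff₀ hpc).2 hd2
        linarith
      have keyB : ∀ b ∈ B, b - t ≤ γ * V := by
        intro b hb
        obtain ⟨d, hd, hpd, rfl⟩ := memB b hb
        have hnd : (0:ℝ) < -sc d := by linarith
        have hs : 1 / (-sc d) ≤ S := by
          have h := le_foldr_max (l := L.map fun c => if sc c = 0 then 0 else 1 / |sc c|)
            (List.mem_map.2 ⟨d, hd, by rw [if_neg (ne_of_lt hpd)]⟩) 0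
          rwa [abs_of_neg hpd] at h
        have h1s : 1 ≤ S * (-sc d) := by
          rw [div_le_iff₀ hnd] at hs; linarith
        have hdiff : |cval (ic d) y' - cval (ic d) x'| ≤ W * (C' * (kap L * V)) := by
          refine le_trans (cval_diff_le (ic d) (M := C' * (kap L * V)) fun i => ?_) ?_
          · rw [abs_sub_comm]; exact hy'd i
          · exact mul_le_mul_of_nonneg_right (hWc d hd)
              (mul_nonneg hC'0 (mul_nonneg hk0.le hV0))
        have hcx : cval (ic d) x' + sc d * t ≤ V := by
          have h1 : cval d x ≤ V := cval_le_viol hd x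
          rw [← hx, cval_snoc] at h1
          exact h1
        have hP : 0 ≤ (1 + W * (C' * kap L)) * V :=
          mul_nonneg (by nlinarith [mul_nonneg hW0 (mul_nonneg hC'0 hk0.le)]) hV0
        have hmain : (1 + W * (C' * kap L)) * V ≤ (-sc d) * (γ * V) := by
          have e : (-sc d) * (γ * V) = (S * (-sc d)) * ((1 + W * (C' * kap L)) * V) := by
            rw [hγdef]; ring
          rw [e]
          exact le_mul_of_one_le_left hP h1s
        have h2 : cval (ic d) y' ≤ (1 + W * (C' * kap L)) * V + (-sc d) * t := by
          have h3 := (abs_le.1 hdiff).2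
          linarith
        have hd2 : cval (ic d) y' ≤ (γ * V + t) * (-sc d) := by linarith
        have hd3 := (div_le_iff₀ hnd).2 hd2
        linarith
      have hlast : |t - t'| ≤ γ * V := by
        refine le_trans ht'd (max_le (foldr_max_le ?_ hγV0) (foldr_max_le ?_ hγV0))
        · intro u hu
          rcases List.mem_map.1 hu with ⟨a, ha, rfl⟩
          exact keyA a ha
        · intro u hu
          rcases List.mem_map.1 hu with ⟨b, hb, rfl⟩
          exact keyB b hb
      refine ⟨Fin.snoc y' t', hsat, fun i => ?_⟩
      refine Fin.lastCases ?_ (fun j => ?_) i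
      · rw [Fin.snoc_last]
        have e : x (Fin.last n) = t := rfl
        rw [e]
        exact le_trans hlast (mul_le_mul_of_nonneg_right (le_max_right _ _) hV0)
      · rw [Fin.snoc_castSucc]
        have e : x j.castSucc = x' j := rfl
        rw [e]
        refine le_trans (hy'd j) ?_
        rw [← mul_assoc]
        exact mul_le_mul_of_nonneg_right (le_max_left _ _) hV0
    · right
      refine ⟨δ' / kap L, div_pos hδ'0 hk0, fun x => ?_⟩
      rw [div_le_iff₀ hk0]
      have h1 := hδ' (Fin.init x)
      have h2 := viol_elim L (Fin.init x) (x (Fin.last n))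
      rw [Fin.snoc_init_self] at h2
      calc δ' ≤ Viol (elim L) (Fin.init x) := h1
      _ ≤ kap L * Viol L x := h2
      _ = Viol L x * kap L := mul_comm _ _
/-! ### max-min representations -/

noncomputable def vmax : List ℝ → ℝ
  | [] => 0
  | a :: l => l.foldr max a

noncomputable def vmin : List ℝ → ℝ
  | [] => 0
  | a :: l => l.foldr min a

theorem le_vmax {l : List ℝ} {a : ℝ} (h : a ∈ l) : a ≤ vmax l := by
  cases l with
  | nil => cases h
  | cons b l =>
    rcases List.mem_cons.1 h with rfl | h
    · exact init_le_foldr_max _ _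
    · exact le_foldr_max h _

theorem vmax_le {l : List ℝ} (hl : l ≠ []) {m : ℝ} (h : ∀ a ∈ l, a ≤ m) : vmax l ≤ m := by
  cases l with
  | nil => exact absurd rfl hl
  | cons b l =>
    exact foldr_max_le (fun a ha => h a (List.mem_cons_of_mem _ ha)) (h b (List.mem_cons_self))

theorem vmax_mem {l : List ℝ} (hl : l ≠ []) : vmax l ∈ l := by
  cases l with
  | nil => exact absurd rfl hl
  | cons b l =>
    rcases foldr_max_mem l b with h | h
    · rw [vmax, h]; exact List.mem_cons_self
    · exact List.mem_cons_of_mem _ h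

theorem vmin_le {l : List ℝ} {a : ℝ} (h : a ∈ l) : vmin l ≤ a := by
  cases l with
  | nil => cases h
  | cons b l =>
    rcases List.mem_cons.1 h with rfl | h
    · exact foldr_min_le_init _ _
    · exact foldr_min_le h _

theorem le_vmin {l : List ℝ} (hl : l ≠ []) {m : ℝ} (h : ∀ a ∈ l, m ≤ a) : m ≤ vmin l := by
  cases l with
  | nil => exact absurd rfl hl
  | cons b l =>
    exact le_foldr_min (fun a ha => h a (List.mem_cons_of_mem _ ha)) (h b (List.mem_cons_self))

theorem vmin_mem {l : List ℝ} (hl : l ≠ []) : vmin l ∈ l := by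
  cases l with
  | nil => exact absurd rfl hl
  | cons b l =>
    rcases foldr_min_mem l b with h | h
    · rw [vmin, h]; exact List.mem_cons_self
    · exact List.mem_cons_of_mem _ h

theorem vmax_append {l₁ l₂ : List ℝ} (h1 : l₁ ≠ []) (h2 : l₂ ≠ []) :
    vmax (l₁ ++ l₂) = max (vmax l₁) (vmax l₂) := by
  have hne : l₁ ++ l₂ ≠ [] := fun h => h1 (List.append_eq_nil_iff.1 h).1
  apply le_antisymm
  · apply vmax_le hne
    intro a ha
    rcases List.mem_append.1 ha with h | h
    · exact le_trans (le_vmax h) (le_max_left _ _)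
    · exact le_trans (le_vmax h) (le_max_right _ _)
  · exact max_le (le_vmax (List.mem_append_left _ (vmax_mem h1)))
      (le_vmax (List.mem_append_right _ (vmax_mem h2)))

theorem vmin_append {l₁ l₂ : List ℝ} (h1 : l₁ ≠ []) (h2 : l₂ ≠ []) :
    vmin (l₁ ++ l₂) = min (vmin l₁) (vmin l₂) := by
  have hne : l₁ ++ l₂ ≠ [] := fun h => h1 (List.append_eq_nil_iff.1 h).1
  apply le_antisymm
  · exact le_min (vmin_le (List.mem_append_left _ (vmin_mem h1)))
      (vmin_le (List.mem_append_right _ (vmin_mem h2)))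
  · apply le_vmin hne
    intro a ha
    rcases List.mem_append.1 ha with h | h
    · exact le_trans (min_le_left _ _) (vmin_le h)
    · exact le_trans (min_le_right _ _) (vmin_le h)

noncomputable def rowVal {n : ℕ} (r : List (Cst n)) (x : Fin n → ℝ) : ℝ :=
  vmin (r.map fun c => cval c x)

noncomputable def repVal {n : ℕ} (R : List (List (Cst n))) (x : Fin n → ℝ) : ℝ :=
  vmax (R.map fun r => rowVal r x)

def Good {n : ℕ} (R : List (List (Cst n))) : Prop := R ≠ [] ∧ ∀ r ∈ R, r ≠ []

theorem map_ne_nil {α β : Type*} {l : List α} (h : l ≠ []) (f : α → β) : l.map f ≠ [] := by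
  cases l with
  | nil => exact absurd rfl h
  | cons a l => simp

theorem rowVal_le_cval {n : ℕ} {r : List (Cst n)} {c : Cst n} (h : c ∈ r) (x : Fin n → ℝ) :
    rowVal r x ≤ cval c x :=
  vmin_le (List.mem_map.2 ⟨c, h, rfl⟩)

theorem le_rowVal {n : ℕ} {r : List (Cst n)} (hr : r ≠ []) {x : Fin n → ℝ} {m : ℝ}
    (h : ∀ c ∈ r, m ≤ cval c x) : m ≤ rowVal r x := by
  apply le_vmin (map_ne_nil hr _)
  intro a ha
  rcases List.mem_map.1 ha with ⟨c, hc, rfl⟩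
  exact h c hc

theorem rowVal_attain {n : ℕ} {r : List (Cst n)} (hr : r ≠ []) (x : Fin n → ℝ) :
    ∃ c ∈ r, rowVal r x = cval c x := by
  have h := vmin_mem (l := r.map fun c => cval c x) (map_ne_nil hr _)
  rcases List.mem_map.1 h with ⟨c, hc, he⟩
  exact ⟨c, hc, he.symm⟩

theorem rowVal_le_repVal {n : ℕ} {R : List (List (Cst n))} {r : List (Cst n)} (h : r ∈ R)
    (x : Fin n → ℝ) : rowVal r x ≤ repVal R x :=
  le_vmax (List.mem_map.2 ⟨r, h, rfl⟩)

theorem repVal_le {n : ℕ} {R : List (List (Cst n))} (hR : R ≠ []) {x : Fin n → ℝ} {m : ℝ}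
    (h : ∀ r ∈ R, rowVal r x ≤ m) : repVal R x ≤ m := by
  apply vmax_le (map_ne_nil hR _)
  intro a ha
  rcases List.mem_map.1 ha with ⟨r, hr, rfl⟩
  exact h r hr

theorem repVal_attain {n : ℕ} {R : List (List (Cst n))} (hR : R ≠ []) (x : Fin n → ℝ) :
    ∃ r ∈ R, repVal R x = rowVal r x := by
  have h := vmax_mem (l := R.map fun r => rowVal r x) (map_ne_nil hR _)
  rcases List.mem_map.1 h with ⟨r, hr, he⟩
  exact ⟨r, hr, he.symm⟩

theorem rowVal_append {n : ℕ} {r₁ r₂ : List (Cst n)} (h1 : r₁ ≠ []) (h2 : r₂ ≠ [])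
    (x : Fin n → ℝ) : rowVal (r₁ ++ r₂) x = min (rowVal r₁ x) (rowVal r₂ x) := by
  unfold rowVal
  rw [List.map_append]
  exact vmin_append (map_ne_nil h1 _) (map_ne_nil h2 _)

theorem repVal_append {n : ℕ} {R₁ R₂ : List (List (Cst n))} (h1 : R₁ ≠ []) (h2 : R₂ ≠ [])
    (x : Fin n → ℝ) : repVal (R₁ ++ R₂) x = max (repVal R₁ x) (repVal R₂ x) := by
  unfold repVal
  rw [List.map_append]
  exact vmax_append (map_ne_nil h1 _) (map_ne_nil h2 _)

theorem good_append {n : ℕ} {R₁ R₂ : List (List (Cst n))} (h1 : Good R₁) (h2 : Good R₂) :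
    Good (R₁ ++ R₂) := by
  refine ⟨fun h => h1.1 (List.append_eq_nil_iff.1 h).1, fun r hr => ?_⟩
  rcases List.mem_append.1 hr with h | h
  · exact h1.2 r h
  · exact h2.2 r h

/-! addition of representations (with a constant offset) -/

noncomputable def cAdd {n : ℕ} (μ : ℝ) (c d : Cst n) : Cst n :=
  (fun i => c.1 i + d.1 i, c.2 + d.2 + μ)

theorem cval_cAdd {n : ℕ} (μ : ℝ) (c d : Cst n) (x : Fin n → ℝ) :
    cval (cAdd μ c d) x = cval c x + cval d x + μ := by
  simp only [cval, cAdd, add_mul, Finset.sum_add_distrib]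
  ring

noncomputable def rAdd {n : ℕ} (μ : ℝ) (r₁ r₂ : List (Cst n)) : List (Cst n) :=
  r₁.flatMap fun c => r₂.map fun d => cAdd μ c d

theorem rAdd_ne_nil {n : ℕ} {μ : ℝ} {r₁ r₂ : List (Cst n)} (h1 : r₁ ≠ []) (h2 : r₂ ≠ []) :
    rAdd μ r₁ r₂ ≠ [] := by
  cases r₁ with
  | nil => exact absurd rfl h1
  | cons c r₁ =>
    cases r₂ with
    | nil => exact absurd rfl h2
    | cons d r₂ =>
      apply List.ne_nil_of_mem (a := cAdd μ c d)
      exact List.mem_flatMap.2 ⟨c, List.mem_cons_self,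
        List.mem_map.2 ⟨d, List.mem_cons_self, rfl⟩⟩

theorem mem_rAdd {n : ℕ} {μ : ℝ} {r₁ r₂ : List (Cst n)} {e : Cst n} (h : e ∈ rAdd μ r₁ r₂) :
    ∃ c ∈ r₁, ∃ d ∈ r₂, e = cAdd μ c d := by
  rcases List.mem_flatMap.1 h with ⟨c, hc, h2⟩
  rcases List.mem_map.1 h2 with ⟨d, hd, rfl⟩
  exact ⟨c, hc, d, hd, rfl⟩

theorem rowVal_rAdd {n : ℕ} {μ : ℝ} {r₁ r₂ : List (Cst n)} (h1 : r₁ ≠ []) (h2 : r₂ ≠ [])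
    (x : Fin n → ℝ) : rowVal (rAdd μ r₁ r₂) x = rowVal r₁ x + rowVal r₂ x + μ := by
  apply le_antisymm
  · obtain ⟨c, hc, he1⟩ := rowVal_attain h1 x
    obtain ⟨d, hd, he2⟩ := rowVal_attain h2 x
    have hm : cAdd μ c d ∈ rAdd μ r₁ r₂ :=
      List.mem_flatMap.2 ⟨c, hc, List.mem_map.2 ⟨d, hd, rfl⟩⟩
    calc rowVal (rAdd μ r₁ r₂) x ≤ cval (cAdd μ c d) x := rowVal_le_cval hm x
    _ = rowVal r₁ x + rowVal r₂ x + μ := by rw [cval_cAdd, ← he1, ← he2]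
  · apply le_rowVal (rAdd_ne_nil h1 h2)
    intro e he
    obtain ⟨c, hc, d, hd, rfl⟩ := mem_rAdd he
    rw [cval_cAdd]
    have := rowVal_le_cval hc x
    have := rowVal_le_cval hd x
    linarith

noncomputable def RAdd {n : ℕ} (μ : ℝ) (R₁ R₂ : List (List (Cst n))) : List (List (Cst n)) :=
  R₁.flatMap fun r₁ => R₂.map fun r₂ => rAdd μ r₁ r₂

theorem good_RAdd {n : ℕ} {μ : ℝ} {R₁ R₂ : List (List (Cst n))} (h1 : Good R₁) (h2 : Good R₂) :
    Good (RAdd μ R₁ R₂) := by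
  constructor
  · obtain ⟨r₁, hr₁⟩ := List.exists_mem_of_ne_nil _ h1.1
    obtain ⟨r₂, hr₂⟩ := List.exists_mem_of_ne_nil _ h2.1
    exact List.ne_nil_of_mem (List.mem_flatMap.2 ⟨r₁, hr₁, List.mem_map.2 ⟨r₂, hr₂, rfl⟩⟩)
  · intro r hr
    rcases List.mem_flatMap.1 hr with ⟨r₁, hr₁, h⟩
    rcases List.mem_map.1 h with ⟨r₂, hr₂, rfl⟩
    exact rAdd_ne_nil (h1.2 _ hr₁) (h2.2 _ hr₂)

theorem repVal_RAdd {n : ℕ} {μ : ℝ} {R₁ R₂ : List (List (Cst n))} (h1 : Good R₁) (h2 : Good R₂)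
    (x : Fin n → ℝ) : repVal (RAdd μ R₁ R₂) x = repVal R₁ x + repVal R₂ x + μ := by
  apply le_antisymm
  · apply repVal_le (good_RAdd h1 h2).1
    intro r hr
    rcases List.mem_flatMap.1 hr with ⟨r₁, hr₁, h⟩
    rcases List.mem_map.1 h with ⟨r₂, hr₂, rfl⟩
    rw [rowVal_rAdd (h1.2 _ hr₁) (h2.2 _ hr₂)]
    have := rowVal_le_repVal hr₁ x
    have := rowVal_le_repVal hr₂ x
    linarith
  · obtain ⟨r₁, hr₁, he1⟩ := repVal_attain h1.1 x
    obtain ⟨r₂, hr₂, he2⟩ := repVal_attain h2.1 x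
    have hm : rAdd μ r₁ r₂ ∈ RAdd μ R₁ R₂ :=
      List.mem_flatMap.2 ⟨r₁, hr₁, List.mem_map.2 ⟨r₂, hr₂, rfl⟩⟩
    calc repVal R₁ x + repVal R₂ x + μ = rowVal (rAdd μ r₁ r₂) x := by
          rw [rowVal_rAdd (h1.2 _ hr₁) (h2.2 _ hr₂), ← he1, ← he2]
    _ ≤ repVal (RAdd μ R₁ R₂) x := rowVal_le_repVal hm x

/-! pointwise minimum of representations -/

noncomputable def RMin {n : ℕ} (R₁ R₂ : List (List (Cst n))) : List (List (Cst n)) :=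
  R₁.flatMap fun r₁ => R₂.map fun r₂ => r₁ ++ r₂

theorem good_RMin {n : ℕ} {R₁ R₂ : List (List (Cst n))} (h1 : Good R₁) (h2 : Good R₂) :
    Good (RMin R₁ R₂) := by
  constructor
  · obtain ⟨r₁, hr₁⟩ := List.exists_mem_of_ne_nil _ h1.1
    obtain ⟨r₂, hr₂⟩ := List.exists_mem_of_ne_nil _ h2.1
    exact List.ne_nil_of_mem (List.mem_flatMap.2 ⟨r₁, hr₁, List.mem_map.2 ⟨r₂, hr₂, rfl⟩⟩)
  · intro r hr
    rcases List.mem_flatMap.1 hr with ⟨r₁, hr₁, h⟩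
    rcases List.mem_map.1 h with ⟨r₂, hr₂, rfl⟩
    intro hn
    exact h1.2 _ hr₁ (List.append_eq_nil_iff.1 hn).1

theorem repVal_RMin {n : ℕ} {R₁ R₂ : List (List (Cst n))} (h1 : Good R₁) (h2 : Good R₂)
    (x : Fin n → ℝ) : repVal (RMin R₁ R₂) x = min (repVal R₁ x) (repVal R₂ x) := by
  apply le_antisymm
  · obtain ⟨r, hr, he⟩ := repVal_attain (good_RMin h1 h2).1 x
    rcases List.mem_flatMap.1 hr with ⟨r₁, hr₁, h⟩
    rcases List.mem_map.1 h with ⟨r₂, hr₂, rfl⟩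
    rw [he, rowVal_append (h1.2 _ hr₁) (h2.2 _ hr₂)]
    exact min_le_min (rowVal_le_repVal hr₁ x) (rowVal_le_repVal hr₂ x)
  · obtain ⟨r₁, hr₁, he1⟩ := repVal_attain h1.1 x
    obtain ⟨r₂, hr₂, he2⟩ := repVal_attain h2.1 x
    have hm : r₁ ++ r₂ ∈ RMin R₁ R₂ :=
      List.mem_flatMap.2 ⟨r₁, hr₁, List.mem_map.2 ⟨r₂, hr₂, rfl⟩⟩
    calc min (repVal R₁ x) (repVal R₂ x) = rowVal (r₁ ++ r₂) x := by
          rw [rowVal_append (h1.2 _ hr₁) (h2.2 _ hr₂), ← he1, ← he2]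
    _ ≤ repVal (RMin R₁ R₂) x := rowVal_le_repVal hm x

/-! base constraints -/

noncomputable def cConst {n : ℕ} (b : ℝ) : Cst n := (fun _ => 0, b)

theorem cval_cConst {n : ℕ} (b : ℝ) (x : Fin n → ℝ) : cval (cConst b) x = b := by
  simp [cval, cConst]

noncomputable def cVar {n : ℕ} (i : Fin n) : Cst n := (fun j => if j = i then 1 else 0, 0)

theorem cval_cVar {n : ℕ} (i : Fin n) (x : Fin n → ℝ) : cval (cVar i) x = x i := by
  simp [cval, cVar, ite_mul]

noncomputable def cNegVar {n : ℕ} (i : Fin n) : Cst n := (fun j => if j = i then -1 else 0, 1)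

theorem cval_cNegVar {n : ℕ} (i : Fin n) (x : Fin n → ℝ) : cval (cNegVar i) x = 1 - x i := by
  simp [cval, cNegVar, ite_mul]
  ring

theorem good_single {n : ℕ} (c : Cst n) : Good [[c]] := by
  refine ⟨by simp, by simp⟩

theorem repVal_single {n : ℕ} (c : Cst n) (x : Fin n → ℝ) : repVal [[c]] x = cval c x := by
  simp [repVal, rowVal, vmax, vmin]

/-! every MV-term and its co-term have max-min representations -/

theorem one_sub_max (u : ℝ) : 1 - max 0 u = min 1 (1 - u) := by
  rcases le_total 0 u with h | h
  · rw [max_eq_right h, min_eq_right (by linarith : (1:ℝ) - u ≤ 1)]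
  · rw [max_eq_left h, min_eq_left (by linarith : (1:ℝ) ≤ 1 - u)]
    norm_num

theorem one_sub_min (u : ℝ) : 1 - min 1 u = max 0 (1 - u) := by
  rcases le_total 1 u with h | h
  · rw [min_eq_left h, max_eq_left (by linarith : (1:ℝ) - u ≤ 0)]
    norm_num
  · rw [min_eq_right h, max_eq_right (by linarith : (0:ℝ) ≤ 1 - u)]

theorem exists_rep {n : ℕ} (t : MVT n) :
    ∃ R S : List (List (Cst n)), Good R ∧ Good S ∧
      ∀ x : Fin n → ℝ, evalM x t = repVal R x ∧ 1 - evalM x t = repVal S x := by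
  induction t with
  | var i =>
    refine ⟨[[cVar i]], [[cNegVar i]], good_single _, good_single _, fun x => ?_⟩
    rw [repVal_single, repVal_single, cval_cVar, cval_cNegVar]
    exact ⟨rfl, rfl⟩
  | zero =>
    refine ⟨[[cConst 0]], [[cConst 1]], good_single _, good_single _, fun x => ?_⟩
    rw [repVal_single, repVal_single, cval_cConst, cval_cConst]
    exact ⟨rfl, by norm_num [evalM]⟩
  | one =>
    refine ⟨[[cConst 1]], [[cConst 0]], good_single _, good_single _, fun x => ?_⟩
    rw [repVal_single, repVal_single, cval_cConst, cval_cConst]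
    exact ⟨rfl, by norm_num [evalM]⟩
  | mul a b iha ihb =>
    obtain ⟨Ra, Sa, hRa, hSa, ha⟩ := iha
    obtain ⟨Rb, Sb, hRb, hSb, hb⟩ := ihb
    refine ⟨[[cConst 0]] ++ RAdd (-1) Ra Rb, RMin [[cConst 1]] (RAdd 0 Sa Sb),
      good_append (good_single _) (good_RAdd hRa hRb),
      good_RMin (good_single _) (good_RAdd hSa hSb), fun x => ?_⟩
    obtain ⟨e1a, e2a⟩ := ha x
    obtain ⟨e1b, e2b⟩ := hb x
    constructor
    · rw [repVal_append (good_single (cConst 0)).1 (good_RAdd hRa hRb).1,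
        repVal_RAdd hRa hRb, repVal_single, cval_cConst, ← e1a, ← e1b]
      show max 0 (evalM x a + evalM x b - 1) = _
      congr 1 <;> ring
    · rw [repVal_RMin (good_single (cConst 1)) (good_RAdd hSa hSb),
        repVal_RAdd hSa hSb, repVal_single, cval_cConst, ← e2a, ← e2b]
      show 1 - max 0 (evalM x a + evalM x b - 1) = _
      rw [one_sub_max]
      congr 1 <;> ring
  | imp a b iha ihb =>
    obtain ⟨Ra, Sa, hRa, hSa, ha⟩ := iha
    obtain ⟨Rb, Sb, hRb, hSb, hb⟩ := ihb
    refine ⟨RMin [[cConst 1]] (RAdd 0 Sa Rb), [[cConst 0]] ++ RAdd (-1) Ra Sb,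
      good_RMin (good_single _) (good_RAdd hSa hRb),
      good_append (good_single _) (good_RAdd hRa hSb), fun x => ?_⟩
    obtain ⟨e1a, e2a⟩ := ha x
    obtain ⟨e1b, e2b⟩ := hb x
    constructor
    · rw [repVal_RMin (good_single (cConst 1)) (good_RAdd hSa hRb),
        repVal_RAdd hSa hRb, repVal_single, cval_cConst, ← e2a, ← e1b]
      show min 1 (1 - evalM x a + evalM x b) = _
      congr 1 <;> ring
    · rw [repVal_append (good_single (cConst 0)).1 (good_RAdd hRa hSb).1,
        repVal_RAdd hRa hSb, repVal_single, cval_cConst, ← e1a, ← e2b]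
      show 1 - min 1 (1 - evalM x a + evalM x b) = _
      rw [one_sub_min]
      congr 1 <;> ring
  | inf a b iha ihb =>
    obtain ⟨Ra, Sa, hRa, hSa, ha⟩ := iha
    obtain ⟨Rb, Sb, hRb, hSb, hb⟩ := ihb
    refine ⟨RMin Ra Rb, Sa ++ Sb, good_RMin hRa hRb, good_append hSa hSb, fun x => ?_⟩
    obtain ⟨e1a, e2a⟩ := ha x
    obtain ⟨e1b, e2b⟩ := hb x
    constructor
    · rw [repVal_RMin hRa hRb, ← e1a, ← e1b]
      rfl
    · rw [repVal_append hSa.1 hSb.1, ← e2a, ← e2b]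
      show 1 - min (evalM x a) (evalM x b) = _
      rcases le_total (evalM x a) (evalM x b) with h | h
      · rw [min_eq_left h, max_eq_left (by linarith)]
      · rw [min_eq_right h, max_eq_right (by linarith)]
  | sup a b iha ihb =>
    obtain ⟨Ra, Sa, hRa, hSa, ha⟩ := iha
    obtain ⟨Rb, Sb, hRb, hSb, hb⟩ := ihb
    refine ⟨Ra ++ Rb, RMin Sa Sb, good_append hRa hRb, good_RMin hSa hSb, fun x => ?_⟩
    obtain ⟨e1a, e2a⟩ := ha x
    obtain ⟨e1b, e2b⟩ := hb x
    constructor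
    · rw [repVal_append hRa.1 hRb.1, ← e1a, ← e1b]
      rfl
    · rw [repVal_RMin hSa hSb, ← e2a, ← e2b]
      show 1 - max (evalM x a) (evalM x b) = _
      rcases le_total (evalM x a) (evalM x b) with h | h
      · rw [max_eq_right h, min_eq_right (by linarith)]
      · rw [max_eq_left h, min_eq_left (by linarith)]
/-! ### elementary facts about `evalM` -/

theorem evalM_mem_Icc {n : ℕ} (t : MVT n) {x : Fin n → ℝ} (hx : x ∈ Cube n) :
    0 ≤ evalM x t ∧ evalM x t ≤ 1 := by
  induction t with
  | var i => exact ⟨(hx i).1, (hx i).2⟩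
  | zero => norm_num [evalM]
  | one => norm_num [evalM]
  | mul a b iha ihb =>
    simp only [evalM, lmul]
    exact ⟨le_max_left _ _, max_le (by norm_num) (by linarith [iha.1, iha.2, ihb.1, ihb.2])⟩
  | imp a b iha ihb =>
    simp only [evalM, limp]
    exact ⟨le_min (by norm_num) (by linarith [iha.1, iha.2, ihb.1, ihb.2]), min_le_left _ _⟩
  | inf a b iha ihb =>
    simp only [evalM]
    exact ⟨le_min iha.1 ihb.1, le_trans (min_le_left _ _) iha.2⟩
  | sup a b iha ihb =>
    simp only [evalM]
    exact ⟨le_trans iha.1 (le_max_left _ _), max_le iha.2 ihb.2⟩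

theorem min_lip (a b c d : ℝ) : |min a b - min c d| ≤ |a - c| + |b - d| := by
  rcases le_total a b with h | h <;> rcases le_total c d with h' | h' <;>
    simp only [min_eq_left, min_eq_right, *] <;>
    cases abs_cases (a - c) <;> cases abs_cases (b - d) <;>
    cases abs_cases (a - d) <;> cases abs_cases (b - c) <;> linarith

theorem max_lip (a b c d : ℝ) : |max a b - max c d| ≤ |a - c| + |b - d| := by
  rcases le_total a b with h | h <;> rcases le_total c d with h' | h' <;>
    simp only [max_eq_left, max_eq_right, *] <;>
    cases abs_cases (a - c) <;> cases abs_cases (b - d) <;>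
    cases abs_cases (a - d) <;> cases abs_cases (b - c) <;> linarith

theorem evalM_lip {n : ℕ} (t : MVT n) :
    ∃ L : ℝ, 0 ≤ L ∧ ∀ x y : Fin n → ℝ,
      |evalM x t - evalM y t| ≤ L * ∑ i, |x i - y i| := by
  induction t with
  | var i =>
    refine ⟨1, zero_le_one, fun x y => ?_⟩
    rw [one_mul]
    exact Finset.single_le_sum (f := fun i => |x i - y i|) (fun i _ => abs_nonneg _)
      (Finset.mem_univ i)
  | zero => exact ⟨0, le_rfl, fun x y => by simp [evalM]⟩
  | one => exact ⟨0, le_rfl, fun x y => by simp [evalM]⟩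
  | mul a b iha ihb =>
    obtain ⟨La, hLa0, hLa⟩ := iha
    obtain ⟨Lb, hLb0, hLb⟩ := ihb
    refine ⟨La + Lb, by linarith, fun x y => ?_⟩
    have h1 := max_lip 0 (evalM x a + evalM x b - 1) 0 (evalM y a + evalM y b - 1)
    simp only [sub_self, abs_zero, zero_add] at h1
    have h2 : |evalM x a + evalM x b - 1 - (evalM y a + evalM y b - 1)| ≤
        |evalM x a - evalM y a| + |evalM x b - evalM y b| := by
      have := abs_add_le (evalM x a - evalM y a) (evalM x b - evalM y b)
      have e : evalM x a + evalM x b - 1 - (evalM y a + evalM y b - 1) =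
          (evalM x a - evalM y a) + (evalM x b - evalM y b) := by ring
      rw [e]; exact this
    have h3 := hLa x y
    have h4 := hLb x y
    simp only [evalM, lmul]
    calc |max 0 (evalM x a + evalM x b - 1) - max 0 (evalM y a + evalM y b - 1)|
        ≤ |evalM x a + evalM x b - 1 - (evalM y a + evalM y b - 1)| := h1
    _ ≤ (La + Lb) * ∑ i, |x i - y i| := by rw [add_mul]; linarith
  | imp a b iha ihb =>
    obtain ⟨La, hLa0, hLa⟩ := iha
    obtain ⟨Lb, hLb0, hLb⟩ := ihb
    refine ⟨La + Lb, by linarith, fun x y => ?_⟩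
    have h1 := min_lip 1 (1 - evalM x a + evalM x b) 1 (1 - evalM y a + evalM y b)
    simp only [sub_self, abs_zero, zero_add] at h1
    have h2 : |1 - evalM x a + evalM x b - (1 - evalM y a + evalM y b)| ≤
        |evalM x a - evalM y a| + |evalM x b - evalM y b| := by
      have h5 := abs_add_le (evalM y a - evalM x a) (evalM x b - evalM y b)
      have e : 1 - evalM x a + evalM x b - (1 - evalM y a + evalM y b) =
          (evalM y a - evalM x a) + (evalM x b - evalM y b) := by ring
      rw [e, abs_sub_comm (evalM y a) (evalM x a)] at *
      exact h5
    have h3 := hLa x y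
    have h4 := hLb x y
    simp only [evalM, limp]
    calc |min 1 (1 - evalM x a + evalM x b) - min 1 (1 - evalM y a + evalM y b)|
        ≤ |1 - evalM x a + evalM x b - (1 - evalM y a + evalM y b)| := h1
    _ ≤ (La + Lb) * ∑ i, |x i - y i| := by rw [add_mul]; linarith
  | inf a b iha ihb =>
    obtain ⟨La, hLa0, hLa⟩ := iha
    obtain ⟨Lb, hLb0, hLb⟩ := ihb
    refine ⟨La + Lb, by linarith, fun x y => ?_⟩
    have h1 := min_lip (evalM x a) (evalM x b) (evalM y a) (evalM y b)
    have h3 := hLa x y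
    have h4 := hLb x y
    simp only [evalM]
    calc |min (evalM x a) (evalM x b) - min (evalM y a) (evalM y b)|
        ≤ |evalM x a - evalM y a| + |evalM x b - evalM y b| := h1
    _ ≤ (La + Lb) * ∑ i, |x i - y i| := by rw [add_mul]; linarith
  | sup a b iha ihb =>
    obtain ⟨La, hLa0, hLa⟩ := iha
    obtain ⟨Lb, hLb0, hLb⟩ := ihb
    refine ⟨La + Lb, by linarith, fun x y => ?_⟩
    have h1 := max_lip (evalM x a) (evalM x b) (evalM y a) (evalM y b)
    have h3 := hLa x y
    have h4 := hLb x y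
    simp only [evalM]
    calc |max (evalM x a) (evalM x b) - max (evalM y a) (evalM y b)|
        ≤ |evalM x a - evalM y a| + |evalM x b - evalM y b| := h1
    _ ≤ (La + Lb) * ∑ i, |x i - y i| := by rw [add_mul]; linarith

/-! ### powers -/

theorem powL_one_eq (k : ℕ) : powL k 1 = 1 := by
  induction k with
  | zero => rfl
  | succ k ih => simp [powL, lmul, ih]

theorem powL_le {a : ℝ} (ha : a ≤ 1) (k : ℕ) : powL k a ≤ max 0 (1 - k * (1 - a)) := by
  induction k with
  | zero => simp [powL]
  | succ k ih =>
    have h1 : powL (k + 1) a = max 0 (a + powL k a - 1) := rfl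
    rw [h1]
    rcases le_total (1 - k * (1 - a)) 0 with h | h
    · have h2 : powL k a ≤ 0 := le_trans ih (by rw [max_eq_left h])
      have h3 : a + powL k a - 1 ≤ 0 := by linarith
      rw [max_eq_left h3]
      exact le_max_left _ _
    · have h2 : powL k a ≤ 1 - k * (1 - a) := le_trans ih (by rw [max_eq_right h])
      have h3 : a + powL k a - 1 ≤ 1 - (k + 1 : ℕ) * (1 - a) := by
        push_cast
        nlinarith
      exact max_le_max le_rfl h3

/-! ### cube constraints -/

noncomputable def cUp {n : ℕ} (i : Fin n) : Cst n := (fun j => if j = i then 1 else 0, -1)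

noncomputable def cLo {n : ℕ} (i : Fin n) : Cst n := (fun j => if j = i then -1 else 0, 0)

theorem cval_cUp {n : ℕ} (i : Fin n) (x : Fin n → ℝ) : cval (cUp i) x = x i - 1 := by
  simp [cval, cUp, ite_mul]
  ring

theorem cval_cLo {n : ℕ} (i : Fin n) (x : Fin n → ℝ) : cval (cLo i) x = -x i := by
  simp [cval, cLo, ite_mul]

noncomputable def cubeCsts (n : ℕ) : List (Cst n) :=
  (List.finRange n).flatMap fun i => [cUp i, cLo i]

theorem sat_cubeCsts {n : ℕ} {x : Fin n → ℝ} : Sat (cubeCsts n) x ↔ x ∈ Cube n := by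
  constructor
  · intro h i
    have h1 : cval (cUp i) x ≤ 0 :=
      h _ (List.mem_flatMap.2 ⟨i, List.mem_finRange i, by simp⟩)
    have h2 : cval (cLo i) x ≤ 0 :=
      h _ (List.mem_flatMap.2 ⟨i, List.mem_finRange i, by simp⟩)
    rw [cval_cUp] at h1
    rw [cval_cLo] at h2
    exact ⟨by linarith, by linarith⟩
  · intro h c hc
    rcases List.mem_flatMap.1 hc with ⟨i, _, hci⟩
    have hx := h i
    rcases List.mem_cons.1 hci with rfl | hci
    · rw [cval_cUp]; linarith [hx.2]
    · rcases List.mem_cons.1 hci with rfl | hci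
      · rw [cval_cLo]; linarith [hx.1]
      · cases hci

/-- the "≥ 1" form of a constraint -/
noncomputable def cGe {n : ℕ} (c : Cst n) : Cst n := (fun i => -(c.1 i), 1 - c.2)

theorem cval_cGe {n : ℕ} (c : Cst n) (x : Fin n → ℝ) : cval (cGe c) x = 1 - cval c x := by
  simp only [cval, cGe, neg_mul, Finset.sum_neg_distrib]
  ring

/-! ### the error bound for the one-set of a McNaughton function -/

theorem one_mem_cube {n : ℕ} : (fun _ => (1:ℝ)) ∈ Cube n := fun i => ⟨zero_le_one, le_rfl⟩

theorem rows_uniform {n : ℕ} (f : (Fin n → ℝ) → ℝ) :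
    ∀ Rl : List (List (Cst n)),
      (∀ r ∈ Rl,
          (∃ C, 0 ≤ C ∧ ∀ x ∈ Cube n, ∃ y ∈ Cube n, f y = 1 ∧
            ∀ i, |x i - y i| ≤ C * (1 - rowVal r x)) ∧
          ∀ x ∈ Cube n, rowVal r x ≤ 1) →
      ∃ C, 0 ≤ C ∧ ∀ r ∈ Rl, ∀ x ∈ Cube n, ∃ y ∈ Cube n, f y = 1 ∧
        ∀ i, |x i - y i| ≤ C * (1 - rowVal r x) := by
  intro Rl
  induction Rl with
  | nil => exact fun _ => ⟨0, le_rfl, by simp⟩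
  | cons r Rl ih =>
    intro h
    obtain ⟨⟨Cr, hCr0, hCr⟩, hb⟩ := h r (List.mem_cons_self)
    obtain ⟨C, hC0, hC⟩ := ih fun r' hr' => h r' (List.mem_cons_of_mem _ hr')
    refine ⟨max Cr C, le_trans hCr0 (le_max_left _ _), fun r' hr' x hx => ?_⟩
    rcases List.mem_cons.1 hr' with rfl | hr'
    · obtain ⟨y, hy, hfy, hd⟩ := hCr x hx
      exact ⟨y, hy, hfy, fun i => le_trans (hd i)
        (mul_le_mul_of_nonneg_right (le_max_left _ _) (by linarith [hb x hx]))⟩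
    · obtain ⟨y, hy, hfy, hd⟩ := hC r' hr' x hx
      exact ⟨y, hy, hfy, fun i => le_trans (hd i)
        (mul_le_mul_of_nonneg_right (le_max_right _ _)
          (by linarith [(h r' (List.mem_cons_of_mem _ hr')).2 x hx]))⟩

/-- Key geometric lemma: near any point of the cube there is a point of the one-set of `f`,
    at distance controlled by `1 - f x`. -/
theorem oneset_error_bound {n : ℕ} (f : (Fin n → ℝ) → ℝ) (hf : IsMcN n f)
    (hf1 : f (fun _ => 1) = 1) :
    ∃ C : ℝ, 0 ≤ C ∧ ∀ x ∈ Cube n, ∃ y ∈ Cube n, f y = 1 ∧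
      ∀ i, |x i - y i| ≤ C * (1 - f x) := by
  obtain ⟨t, ht⟩ := hf
  obtain ⟨R, S, hR, _, hrep⟩ := exists_rep t
  have hfR : ∀ x ∈ Cube n, f x = repVal R x := fun x hx => (ht x hx).trans (hrep x).1
  have hf_le : ∀ x ∈ Cube n, f x ≤ 1 := fun x hx => by
    rw [ht x hx]; exact (evalM_mem_Icc t hx).2
  -- uniform bound over all rows of R
  have hrow : ∀ r ∈ R,
      (∃ C, 0 ≤ C ∧ ∀ x ∈ Cube n, ∃ y ∈ Cube n, f y = 1 ∧
        ∀ i, |x i - y i| ≤ C * (1 - rowVal r x)) ∧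
      ∀ x ∈ Cube n, rowVal r x ≤ 1 := by
    intro r hr
    have hrne : r ≠ [] := hR.2 r hr
    have hrV : ∀ x ∈ Cube n, rowVal r x ≤ 1 := by
      intro x hx
      have h1 : rowVal r x ≤ repVal R x := rowVal_le_repVal hr x
      rw [← hfR x hx] at h1
      exact le_trans h1 (hf_le x hx)
    refine ⟨?_, hrV⟩
    set Lr : List (Cst n) := cubeCsts n ++ r.map cGe with hLrdef
    have hviol : ∀ x ∈ Cube n, Viol Lr x ≤ 1 - rowVal r x := by
      intro x hx
      have hm : (0:ℝ) ≤ 1 - rowVal r x := by linarith [hrV x hx]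
      apply viol_le _ hm
      intro c hc
      rcases List.mem_append.1 hc with h | h
      · have := (sat_cubeCsts.2 hx) c h
        linarith
      · rcases List.mem_map.1 h with ⟨c', hc', rfl⟩
        rw [cval_cGe]
        have := rowVal_le_cval hc' x
        linarith
    rcases hoffman n Lr with ⟨C, hC0, hC⟩ | ⟨δ, hδ0, hδ⟩
    · refine ⟨C, hC0, fun x hx => ?_⟩
      obtain ⟨y, hysat, hyd⟩ := hC x
      have hyc : y ∈ Cube n := sat_cubeCsts.1 fun c hc => hysat c (List.mem_append_left _ hc)
      have hfy : f y = 1 := by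
        have h1 : (1:ℝ) ≤ rowVal r y := by
          apply le_rowVal hrne
          intro c hc
          have := hysat (cGe c) (List.mem_append_right _ (List.mem_map.2 ⟨c, hc, rfl⟩))
          rw [cval_cGe] at this
          linarith
        have h2 : rowVal r y ≤ repVal R y := rowVal_le_repVal hr y
        have h3 := hf_le y hyc
        rw [hfR y hyc] at h3 ⊢
        linarith
      refine ⟨y, hyc, hfy, fun i => le_trans (hyd i) ?_⟩
      exact mul_le_mul_of_nonneg_left (hviol x hx) hC0
    · refine ⟨1 / δ, by positivity, fun x hx => ?_⟩
      refine ⟨fun _ => 1, one_mem_cube, hf1, fun i => ?_⟩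
      have h1 : |x i - 1| ≤ 1 := by
        have := (hx i).1
        have := (hx i).2
        rw [abs_le]
        constructor <;> linarith
      have h2 : δ ≤ 1 - rowVal r x := le_trans (hδ x) (hviol x hx)
      calc |x i - (fun _ => (1:ℝ)) i| = |x i - 1| := rfl
      _ ≤ 1 := h1
      _ ≤ 1 / δ * (1 - rowVal r x) := by
          rw [one_div, ← div_eq_inv_mul, le_div_iff₀ hδ0]
          linarith
  obtain ⟨C, hC0, hC⟩ := rows_uniform f R hrow
  refine ⟨C, hC0, fun x hx => ?_⟩
  obtain ⟨r, hr, hre⟩ := repVal_attain hR.1 x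
  obtain ⟨y, hy, hfy, hd⟩ := hC r hr x hx
  refine ⟨y, hy, hfy, fun i => ?_⟩
  have he : 1 - rowVal r x = 1 - f x := by rw [hfR x hx, hre]
  rw [← he]
  exact hd i
end MVAux

open MVAux in
/-- For f, g in the free n-generated Wajsberg hoop F_WH(n) (McNaughton functions with
    f(1,…,1) = 1), g belongs to the congruence filter generated by f — i.e. f^k ≤ g
    pointwise for some k — iff the one-set of f is contained in the one-set of g. -/
theorem filter_mem_iff_oneset_subset (n : ℕ) (f g : (Fin n → ℝ) → ℝ)
    (hf : IsMcN n f) (hg : IsMcN n g)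
    (hf1 : f (fun _ => 1) = 1) (hg1 : g (fun _ => 1) = 1) :
    (∃ k : ℕ, ∀ x ∈ Cube n, powL k (f x) ≤ g x) ↔
      {x ∈ Cube n | f x = 1} ⊆ {x ∈ Cube n | g x = 1} := by
  obtain ⟨tf, htf⟩ := hf
  obtain ⟨tg, htg⟩ := hg
  constructor
  · rintro ⟨k, hk⟩ x ⟨hxc, hfx⟩
    refine ⟨hxc, ?_⟩
    have h1 : powL k (f x) ≤ g x := hk x hxc
    rw [hfx, powL_one_eq] at h1
    have h2 : g x ≤ 1 := by rw [htg x hxc]; exact (evalM_mem_Icc tg hxc).2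
    exact le_antisymm h2 h1
  · intro hsub
    obtain ⟨C, hC0, hC⟩ := oneset_error_bound f ⟨tf, htf⟩ hf1
    obtain ⟨L, hL0, hL⟩ := evalM_lip tg
    refine ⟨⌈L * (n * C)⌉₊, fun x hx => ?_⟩
    have hfx1 : f x ≤ 1 := by rw [htf x hx]; exact (evalM_mem_Icc tf hx).2
    have hgx0 : 0 ≤ g x := by rw [htg x hx]; exact (evalM_mem_Icc tg hx).1
    obtain ⟨y, hyc, hfy, hd⟩ := hC x hx
    have hgy : g y = 1 := (hsub ⟨hyc, hfy⟩).2
    have hsum : ∑ i, |y i - x i| ≤ (n : ℝ) * (C * (1 - f x)) := by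
      calc ∑ i, |y i - x i| ≤ ∑ _i : Fin n, C * (1 - f x) := by
            refine Finset.sum_le_sum fun i _ => ?_
            rw [abs_sub_comm]
            exact hd i
      _ = (n : ℝ) * (C * (1 - f x)) := by
            rw [Finset.sum_const, Finset.card_univ, Fintype.card_fin, nsmul_eq_mul]
    have h1g : 1 - g x ≤ L * ((n : ℝ) * (C * (1 - f x))) := by
      have e1 : 1 - g x = evalM y tg - evalM x tg := by rw [← htg y hyc, ← htg x hx, hgy]
      have h2 : evalM y tg - evalM x tg ≤ |evalM y tg - evalM x tg| := le_abs_self _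
      have h3 : L * ∑ i, |y i - x i| ≤ L * ((n : ℝ) * (C * (1 - f x))) :=
        mul_le_mul_of_nonneg_left hsum hL0
      have h4 := hL y x
      linarith
    have hk : L * (n * C) ≤ (⌈L * (n * C)⌉₊ : ℝ) := Nat.le_ceil _
    have h4 := powL_le hfx1 ⌈L * (n * C)⌉₊
    refine le_trans h4 (max_le hgx0 ?_)
    have h5 : L * (n * C) * (1 - f x) ≤ (⌈L * (n * C)⌉₊ : ℝ) * (1 - f x) :=
      mul_le_mul_of_nonneg_right hk (by linarith)
    nlinarith
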